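/- For every integer m ≥ 3 there exists a constant C ≥ 0 such that for all integers ℓ ≥ 1, the safety value of Player 1 in the two-player competitive diffusion game on the spider S(m,ℓ) satisfies ℓ − √ℓ/√m − C ≤ value(A_S) ≤ ℓ. -/

import Mathlib

/-- The competitive-diffusion payoff of Player 1 with starting vertex `x` against
starting vertex `y`: the number of vertices strictly closer to `x` than to `y`. -/
noncomputable def gain {V : Type*} (G : SimpleGraph V) (x y : V) : ℕ :=
  {u : V | G.dist u x < G.dist u y}.ncard

/-- The expected gain of Player 1 playing mixed strategy `X` against mixed strategy `Y`. -/
noncomputable def Gain {V : Type*} (G : SimpleGraph V) [Fintype V] (X Y : V → ℝ) : ℝ :=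
  ∑ x : V, ∑ y : V, X x * Y y * (gain G x y : ℝ)

/-- The pure strategy `Z(v)` concentrated on vertex `v`. -/
def pureStrat {V : Type*} [DecidableEq V] (v : V) : V → ℝ := fun u => if u = v then 1 else 0

/-- Vertices of a spider with `m` legs each with `ℓ` vertices: `none` is the body,
`some (s, d)` is the vertex at distance `d+1` from the body on leg `s`. -/
abbrev SpiderVert (m ℓ : ℕ) := Option (Fin m × Fin ℓ)

def spiderRel (m ℓ : ℕ) : SpiderVert m ℓ → SpiderVert m ℓ → Prop
  | none, some (_, d) => d.val = 0
  | some (s, d), some (s', d') => s = s' ∧ d.val + 1 = d'.val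
  | _, _ => False

/-- The spider `S(m,ℓ)`: a body vertex to which `m` disjoint paths (legs), each with
`ℓ` vertices, are attached. -/
def Spider (m ℓ : ℕ) : SimpleGraph (SpiderVert m ℓ) := SimpleGraph.fromRel (spiderRel m ℓ)

/-- The mixed strategy `C_S(k)`: probability `1/(mk+1)` on the body and on each
vertex at distance at most `k` from the body on each leg. -/
noncomputable def CS (m ℓ k : ℕ) : SpiderVert m ℓ → ℝ
  | none => 1 / (m * k + 1)
  | some (_, d) => if d.val + 1 ≤ k then 1 / (m * k + 1) else 0

/-- The safety value of Player 1: the maximum over mixed strategies `X` of the minimum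
over vertices `y` of `Gain(G, X, Z(y))`. -/
noncomputable def safetyValue {V : Type*} (G : SimpleGraph V) [Fintype V] [DecidableEq V]
    [Nonempty V] : ℝ :=
  ⨆ X : {X : V → ℝ // (∀ v, 0 ≤ X v) ∧ ∑ v, X v = 1},
    Finset.univ.inf' Finset.univ_nonempty (fun y : V => Gain G X.1 (pureStrat y))

/-!
Player 1 plays `CS m ℓ k`, the uniform distribution on the ball of radius `k ≈ 2 √(ℓ / m)` around
the body. If the opponent sits at the body or outside the ball, a ball vertex at depth `d + 1`
wins at least the `ℓ - (d + 1) / 2` outermost vertices of its own leg, so the expected gain is at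
least `m (k ℓ - k (k + 1) / 4) / (m k + 1)`. If the opponent sits inside the ball on leg `t`, the
body wins all other legs; this outweighs what is lost on leg `t`. Optimising over `k` gives
`ℓ - √(ℓ / m) - O(1)` in both cases. Conversely an opponent at the body concedes at most one leg.
-/

theorem SimpleGraph.Walk.apply_le_apply_add_length {V : Type*} {G : SimpleGraph V} (f : V → ℕ)
    (hf : ∀ u w, G.Adj u w → f u ≤ f w + 1) {u v : V} (p : G.Walk u v) :
    f u ≤ f v + p.length := by
  induction p with
  | nil => simp
  | cons h _ ih => grind [SimpleGraph.Walk.length_cons]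

lemma sum_fin_ite_eq_sum_range {M : Type*} [AddCommMonoid M] {k ℓ : ℕ} (hk : k ≤ ℓ) (b : ℕ → M) :
    (∑ d : Fin ℓ, if d.val + 1 ≤ k then b d else 0) = ∑ j ∈ Finset.range k, b j := by
  rw [Fin.sum_univ_eq_sum_range (fun j => if j + 1 ≤ k then b j else 0), ← Finset.sum_filter]
  congr 1
  ext j
  simp only [Finset.mem_filter, Finset.mem_range]
  omega

section SafetyValue
variable {V : Type*} [DecidableEq V]

lemma pureStrat_nonneg (v u : V) : 0 ≤ pureStrat v u := by
  unfold pureStrat; split_ifs <;> norm_num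

variable [Fintype V] (G : SimpleGraph V)

lemma sum_pureStrat (v : V) : ∑ u, pureStrat v u = 1 := by
  simp [pureStrat]

lemma Gain_pureStrat (X : V → ℝ) (y : V) :
    Gain G X (pureStrat y) = ∑ x, X x * gain G x y := by
  simp [Gain, pureStrat]

lemma Gain_pureStrat_le_card {X : V → ℝ} (hX : ∀ v, 0 ≤ X v) (hX1 : ∑ v, X v = 1) (y : V) :
    Gain G X (pureStrat y) ≤ Fintype.card V := by
  rw [Gain_pureStrat]
  calc ∑ x, X x * (gain G x y : ℝ) ≤ ∑ x, X x * Fintype.card V := by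
        gcongr with x
        · exact hX x
        · exact_mod_cast (Set.ncard_le_card _).trans_eq Nat.card_eq_fintype_card
    _ = Fintype.card V := by rw [← Finset.sum_mul, hX1, one_mul]

variable [Nonempty V] {G}

lemma le_safetyValue {X : V → ℝ} (hX : ∀ v, 0 ≤ X v) (hX1 : ∑ v, X v = 1) {c : ℝ}
    (h : ∀ y, c ≤ Gain G X (pureStrat y)) : c ≤ safetyValue G := by
  have hbdd : BddAbove (Set.range fun X : {X : V → ℝ // (∀ v, 0 ≤ X v) ∧ ∑ v, X v = 1} =>
      Finset.univ.inf' Finset.univ_nonempty fun y => Gain G X.1 (pureStrat y)) := by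
    refine ⟨Fintype.card V, ?_⟩
    rintro _ ⟨X, rfl⟩
    obtain ⟨y⟩ := ‹Nonempty V›
    exact (Finset.inf'_le _ (Finset.mem_univ y)).trans (Gain_pureStrat_le_card G X.2.1 X.2.2 y)
  exact le_ciSup_of_le hbdd ⟨X, hX, hX1⟩ (Finset.le_inf' _ _ fun y _ => h y)

lemma safetyValue_le {c : ℝ}
    (h : ∀ X : V → ℝ, (∀ v, 0 ≤ X v) → ∑ v, X v = 1 → ∃ y, Gain G X (pureStrat y) ≤ c) :
    safetyValue G ≤ c := by
  obtain ⟨v⟩ := ‹Nonempty V›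
  have : Nonempty {X : V → ℝ // (∀ v, 0 ≤ X v) ∧ ∑ v, X v = 1} :=
    ⟨pureStrat v, pureStrat_nonneg v, sum_pureStrat v⟩
  refine ciSup_le fun X => ?_
  obtain ⟨y, hy⟩ := h X.1 X.2.1 X.2.2
  exact (Finset.inf'_le _ (Finset.mem_univ y)).trans hy

lemma safetyValue_nonneg : 0 ≤ safetyValue G := by
  obtain ⟨v⟩ := ‹Nonempty V›
  refine le_safetyValue (pureStrat_nonneg v) (sum_pureStrat v) fun y => ?_
  rw [Gain_pureStrat]
  exact Finset.sum_nonneg fun x _ => mul_nonneg (pureStrat_nonneg v x) (Nat.cast_nonneg _)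

end SafetyValue

namespace Spider

variable {m ℓ : ℕ}

def distFormula : SpiderVert m ℓ → SpiderVert m ℓ → ℕ
  | none, none => 0
  | none, some (_, e) => e + 1
  | some (_, d), none => d + 1
  | some (s, d), some (t, e) => if s = t then max d.val e.val - min d.val e.val else d + e + 2

lemma distFormula_self (u : SpiderVert m ℓ) : distFormula u u = 0 := by
  rcases u with _ | ⟨s, d⟩ <;> simp [distFormula]

lemma distFormula_le_of_adj {u w : SpiderVert m ℓ} (h : (Spider m ℓ).Adj u w)
    (v : SpiderVert m ℓ) : distFormula u v ≤ distFormula w v + 1 := by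
  obtain ⟨-, h | h⟩ := (SimpleGraph.fromRel_adj _ u w).1 h <;>
    rcases u with _ | ⟨s, d⟩ <;> rcases w with _ | ⟨s', d'⟩ <;> simp only [spiderRel] at h <;>
    (try obtain ⟨rfl, h⟩ := h) <;>
    rcases v with _ | ⟨t, e⟩ <;> simp only [distFormula] <;> (try split_ifs) <;> omega

lemma adj_none_some (s : Fin m) (e : Fin ℓ) (he : e.val = 0) :
    (Spider m ℓ).Adj none (some (s, e)) := by
  simp [Spider, SimpleGraph.fromRel_adj, spiderRel, he]

lemma adj_some_some (s : Fin m) (d e : Fin ℓ) (h : d.val + 1 = e.val) :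
    (Spider m ℓ).Adj (some (s, d)) (some (s, e)) := by
  simp only [Spider, SimpleGraph.fromRel_adj, spiderRel, true_and, h, ne_eq, Option.some.injEq,
    Prod.mk.injEq, true_or, and_true]
  omega

lemma exists_walk_some_some (s : Fin m) (d : Fin ℓ) : ∀ (n : ℕ) (e : Fin ℓ), e.val = d.val + n →
    ∃ p : (Spider m ℓ).Walk (some (s, d)) (some (s, e)), p.length = n
  | 0, e, h => by
    obtain rfl : e = d := Fin.ext h
    exact ⟨.nil, rfl⟩
  | n + 1, e, h => by
    obtain ⟨p, hp⟩ := exists_walk_some_some s d n ⟨d.val + n, by omega⟩ rfl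
    exact ⟨p.concat (adj_some_some s _ e (by simp; omega)), by simp [hp]⟩

lemma exists_walk_none_some (s : Fin m) (e : Fin ℓ) :
    ∃ p : (Spider m ℓ).Walk none (some (s, e)), p.length = e.val + 1 := by
  obtain ⟨p, hp⟩ := exists_walk_some_some s ⟨0, e.pos⟩ e.val e (by simp)
  exact ⟨.cons (adj_none_some s _ rfl) p, by simp [hp]⟩

lemma connected : (Spider m ℓ).Connected := by
  have h : ∀ u, (Spider m ℓ).Reachable none u := by
    rintro (_ | ⟨s, e⟩)
    · rfl
    · obtain ⟨p, -⟩ := exists_walk_none_some s e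
      exact ⟨p⟩
  exact ⟨fun u v => (h u).symm.trans (h v)⟩

lemma dist_le_distFormula (u v : SpiderVert m ℓ) : (Spider m ℓ).dist u v ≤ distFormula u v := by
  rcases u with _ | ⟨s, d⟩ <;> rcases v with _ | ⟨t, e⟩
  · simp [distFormula]
  · obtain ⟨p, hp⟩ := exists_walk_none_some t e
    simpa [distFormula, hp] using SimpleGraph.dist_le p
  · obtain ⟨p, hp⟩ := exists_walk_none_some s d
    simpa [distFormula, hp, SimpleGraph.dist_comm] using SimpleGraph.dist_le p
  · by_cases hst : s = t
    · subst hst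
      rcases le_total d e with hde | hde
      · obtain ⟨p, hp⟩ := exists_walk_some_some s d (e - d) e (by omega)
        have := SimpleGraph.dist_le p
        simp only [distFormula, if_true]
        omega
      · obtain ⟨p, hp⟩ := exists_walk_some_some s e (d - e) d (by omega)
        have := SimpleGraph.dist_le p
        rw [SimpleGraph.dist_comm]
        simp only [distFormula, if_true]
        omega
    · obtain ⟨p, hp⟩ := exists_walk_none_some s d
      obtain ⟨q, hq⟩ := exists_walk_none_some t e
      have := SimpleGraph.dist_le (p.reverse.append q)
      simp only [distFormula, hst, if_false]
      simp only [SimpleGraph.Walk.length_append, SimpleGraph.Walk.length_reverse] at this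
      omega

lemma dist_eq_distFormula (u v : SpiderVert m ℓ) : (Spider m ℓ).dist u v = distFormula u v := by
  refine le_antisymm (dist_le_distFormula u v) ?_
  obtain ⟨p, hp⟩ := (connected.preconnected u v).exists_walk_length_eq_dist
  simpa [distFormula_self, hp] using
    p.apply_le_apply_add_length (distFormula · v) fun _ _ h => distFormula_le_of_adj h v

lemma gain_eq (x y : SpiderVert m ℓ) :
    gain (Spider m ℓ) x y = {u | distFormula u x < distFormula u y}.ncard := by
  simp only [gain, dist_eq_distFormula]

lemma ncard_le_gain {x y : SpiderVert m ℓ} {S : Set (SpiderVert m ℓ)}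
    (h : ∀ u ∈ S, distFormula u x < distFormula u y) : S.ncard ≤ gain (Spider m ℓ) x y :=
  gain_eq x y ▸ Set.ncard_le_ncard h

lemma legVertex_injective (s : Fin m) :
    Function.Injective fun e : Fin ℓ => (some (s, e) : SpiderVert m ℓ) :=
  (Option.some_injective _).comp (Prod.mk_right_injective s)

def leg (s : Fin m) : Set (SpiderVert m ℓ) := Set.range fun e => some (s, e)

lemma ncard_leg (s : Fin m) : (leg s : Set (SpiderVert m ℓ)).ncard = ℓ := by
  rw [leg, ← Set.image_univ, Set.ncard_image_of_injective _ (legVertex_injective s),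
    Set.ncard_univ, Nat.card_eq_fintype_card, Fintype.card_fin]

lemma ncard_compl_leg (s : Fin m) : (leg s : Set (SpiderVert m ℓ))ᶜ.ncard = (m - 1) * ℓ + 1 := by
  rw [Set.ncard_compl, ncard_leg, Nat.card_eq_fintype_card]
  simp only [Fintype.card_option, Fintype.card_prod, Fintype.card_fin]
  have : ℓ ≤ m * ℓ := Nat.le_mul_of_pos_left ℓ s.pos
  rw [Nat.sub_one_mul]
  omega

lemma ncard_tail (s : Fin m) (c : ℕ) :
    ((fun e : Fin ℓ => (some (s, e) : SpiderVert m ℓ)) '' {e | c ≤ e.val}).ncard = ℓ - c := by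
  rw [Set.ncard_image_of_injective _ (legVertex_injective s), Set.ncard_eq_toFinset_card']
  have hsplit :=
    Finset.card_filter_add_card_filter_not (s := Finset.univ) (fun e : Fin ℓ => e.val < c)
  rw [Fin.card_filter_val_lt, Finset.card_univ, Fintype.card_fin] at hsplit
  simp only [Set.toFinset_ofPred, not_lt] at hsplit ⊢
  omega

lemma le_gain_of_notMem_leg {s : Fin m} {y : SpiderVert m ℓ} (hy : y ∉ leg s) (d : Fin ℓ) :
    2 * ℓ ≤ 2 * gain (Spider m ℓ) (some (s, d)) y + d + 1 := by
  have h := ncard_tail (m := m) (ℓ := ℓ) s ((d.val + 1) / 2)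
  have : ℓ - (d.val + 1) / 2 ≤ gain (Spider m ℓ) (some (s, d)) y := by
    refine h ▸ ncard_le_gain ?_
    rintro _ ⟨e, (he : _ ≤ e.val), rfl⟩
    rcases y with _ | ⟨t, f⟩
    · simp only [distFormula, if_true]; omega
    · have hts : s ≠ t := by rintro rfl; exact hy ⟨f, rfl⟩
      simp only [distFormula, if_true, hts, if_false]; omega
  omega

lemma le_gain_of_compl_leg {x : SpiderVert m ℓ} {t : Fin m} {q : Fin ℓ}
    (hx : ∀ u ∉ leg t, distFormula u x < distFormula u (some (t, q))) :
    (m - 1) * ℓ + 1 ≤ gain (Spider m ℓ) x (some (t, q)) :=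
  ncard_compl_leg (ℓ := ℓ) t ▸ ncard_le_gain hx

lemma le_gain_none_some (t : Fin m) (q : Fin ℓ) :
    (m - 1) * ℓ + 1 ≤ gain (Spider m ℓ) none (some (t, q)) := by
  refine le_gain_of_compl_leg fun u hu => ?_
  rcases u with _ | ⟨s, e⟩
  · simp [distFormula]
  · have hst : s ≠ t := by rintro rfl; exact hu ⟨e, rfl⟩
    simp only [distFormula, hst, if_false]; omega

lemma le_gain_of_lt {t : Fin m} {d q : Fin ℓ} (hdq : d.val < q.val) :
    (m - 1) * ℓ + 1 ≤ gain (Spider m ℓ) (some (t, d)) (some (t, q)) := by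
  refine le_gain_of_compl_leg fun u hu => ?_
  rcases u with _ | ⟨s, e⟩
  · simp only [distFormula]; omega
  · have hst : s ≠ t := by rintro rfl; exact hu ⟨e, rfl⟩
    simp only [distFormula, hst, if_false]; omega

lemma le_gain_of_gt {t : Fin m} {d q : Fin ℓ} (hqd : q.val < d.val) :
    ℓ ≤ gain (Spider m ℓ) (some (t, d)) (some (t, q)) + d := by
  have : ℓ - d ≤ gain (Spider m ℓ) (some (t, d)) (some (t, q)) := by
    refine ncard_tail (m := m) t d ▸ ncard_le_gain ?_
    rintro _ ⟨e, (he : _ ≤ e.val), rfl⟩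
    simp only [distFormula, if_true]; omega
  omega

lemma gain_le_of_none (x : SpiderVert m ℓ) : gain (Spider m ℓ) x none ≤ ℓ := by
  rw [gain_eq]
  rcases x with _ | ⟨s, d⟩
  · simp
  · refine (Set.ncard_le_ncard fun u hu => ?_).trans (ncard_leg (m := m) s).le
    rcases u with _ | ⟨t, e⟩
    · simp [distFormula] at hu
    · by_cases hts : t = s
      · exact ⟨e, by rw [hts]⟩
      · simp only [Set.mem_ofPred_eq, distFormula, hts, if_false] at hu; omega

noncomputable def legGain (k : ℕ) (s : Fin m) (y : SpiderVert m ℓ) : ℝ :=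
  ∑ d : Fin ℓ, if d.val + 1 ≤ k then (gain (Spider m ℓ) (some (s, d)) y : ℝ) else 0

lemma sum_range_le_legGain {k : ℕ} (hk : k ≤ ℓ) {s : Fin m} {y : SpiderVert m ℓ} {b : ℕ → ℝ}
    (h : ∀ d : Fin ℓ, d.val + 1 ≤ k → b d ≤ gain (Spider m ℓ) (some (s, d)) y) :
    ∑ j ∈ Finset.range k, b j ≤ legGain k s y := by
  rw [legGain, ← sum_fin_ite_eq_sum_range hk]
  gcongr with d
  split_ifs with hd
  · exact h d hd
  · rfl

lemma sum_range_tail (k : ℕ) (c : ℝ) :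
    ∑ j ∈ Finset.range k, (c - ((j : ℝ) + 1) / 2) = k * c - k * (k + 1) / 4 := by
  induction k with
  | zero => simp
  | succ k ih => rw [Finset.sum_range_succ, ih]; push_cast; ring

lemma legGain_ge_of_notMem_leg {k : ℕ} (hk : k ≤ ℓ) {s : Fin m} {y : SpiderVert m ℓ}
    (hy : y ∉ leg s) : k * ℓ - k * (k + 1) / 4 ≤ legGain k s y := by
  rw [← sum_range_tail]
  refine sum_range_le_legGain hk fun d _ => ?_
  have : (2 * ℓ : ℝ) ≤ 2 * gain (Spider m ℓ) (some (s, d)) y + d + 1 := by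
    exact_mod_cast le_gain_of_notMem_leg hy d
  linarith

noncomputable def ballGain (k : ℕ) (y : SpiderVert m ℓ) : ℝ :=
  gain (Spider m ℓ) none y + ∑ s, legGain k s y

lemma Gain_CS (k : ℕ) (y : SpiderVert m ℓ) :
    Gain (Spider m ℓ) (CS m ℓ k) (pureStrat y) = ballGain k y / (m * k + 1) := by
  simp only [Gain_pureStrat, Fintype.sum_option, Fintype.sum_prod_type, CS, ballGain, legGain,
    add_div, Finset.sum_div, ite_mul, zero_mul, ite_div, zero_div, one_div, inv_mul_eq_div]

lemma sum_CS {k : ℕ} (hk : k ≤ ℓ) : ∑ v, CS m ℓ k v = 1 := by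
  have hleg : (∑ d : Fin ℓ, if d.val + 1 ≤ k then 1 / ((m : ℝ) * k + 1) else 0) =
      k * (1 / (m * k + 1)) := by
    rw [sum_fin_ite_eq_sum_range hk fun _ => 1 / ((m : ℝ) * k + 1)]
    simp
  simp only [Fintype.sum_option, Fintype.sum_prod_type, CS, hleg, Finset.sum_const,
    Finset.card_univ, Fintype.card_fin, nsmul_eq_mul]
  field_simp
  ring

lemma CS_nonneg (k : ℕ) (v : SpiderVert m ℓ) : 0 ≤ CS m ℓ k v := by
  rcases v with _ | ⟨s, d⟩ <;> simp only [CS] <;> positivity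

lemma ballGain_ge_of_far (hm : 2 ≤ m) {k : ℕ} (hk : k ≤ ℓ) {y : SpiderVert m ℓ}
    (hy : ∀ t q, y = some (t, q) → k ≤ q.val) : m * (k * ℓ - k * (k + 1) / 4) ≤ ballGain k y := by
  have hleg : ∀ s, k * ℓ - k * (k + 1) / 4 ≤ legGain k s y := by
    intro s
    by_cases hys : y ∈ leg s
    · obtain ⟨q, rfl⟩ := hys
      rw [← sum_range_tail]
      refine sum_range_le_legGain hk fun d hd => ?_
      have : ℓ ≤ gain (Spider m ℓ) (some (s, d)) (some (s, q)) :=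
        (Nat.le_mul_of_pos_left ℓ (by omega)).trans <| (Nat.le_succ _).trans <|
          le_gain_of_lt (show d.val < q.val by have := hy s q rfl; omega)
      have : (ℓ : ℝ) ≤ gain (Spider m ℓ) (some (s, d)) (some (s, q)) := by exact_mod_cast this
      linarith [(by positivity : (0 : ℝ) ≤ ((d : ℕ) + 1) / 2)]
    · exact legGain_ge_of_notMem_leg hk hys
  calc (m : ℝ) * (k * ℓ - k * (k + 1) / 4) = ∑ _s : Fin m, (k * ℓ - k * (k + 1) / 4 : ℝ) := by
        rw [Finset.sum_const, Finset.card_univ, Fintype.card_fin, nsmul_eq_mul]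
    _ ≤ ∑ s, legGain k s y := Finset.sum_le_sum fun s _ => hleg s
    _ ≤ ballGain k y := le_add_of_nonneg_left (Nat.cast_nonneg _)

lemma legGain_ge_of_mem_leg (hm : 2 ≤ m) {k : ℕ} (hk : k ≤ ℓ) (t : Fin m) {q : Fin ℓ}
    (hq : q.val + 1 ≤ k) : k * (ℓ - k) - ℓ ≤ legGain k t (some (t, q)) := by
  -- Every ball vertex of leg `t` other than the opponent's wins `ℓ - k`; the opponent's own
  -- vertex wins nothing and is charged `ℓ`, which the body pays back in `ballGain_ge_of_near`.
  have hsum : ∑ j ∈ Finset.range k, ((ℓ : ℝ) - k - if j = q.val then (ℓ : ℝ) else 0) =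
      k * (ℓ - k) - ℓ := by
    rw [Finset.sum_sub_distrib, Finset.sum_ite_eq' _ _ (fun _ => (ℓ : ℝ)),
      if_pos (Finset.mem_range.2 (by omega))]
    simp [mul_sub]
  rw [← hsum]
  refine sum_range_le_legGain hk fun d hd => ?_
  rcases lt_trichotomy d.val q.val with hdq | hdq | hdq
  · have : ℓ ≤ gain (Spider m ℓ) (some (t, d)) (some (t, q)) :=
      (Nat.le_mul_of_pos_left ℓ (by omega)).trans <| (Nat.le_succ _).trans <| le_gain_of_lt hdq
    have : (ℓ : ℝ) ≤ gain (Spider m ℓ) (some (t, d)) (some (t, q)) := by exact_mod_cast this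
    rw [if_neg hdq.ne]
    linarith [(Nat.cast_nonneg k : (0 : ℝ) ≤ k)]
  · rw [if_pos hdq]
    linarith [(Nat.cast_nonneg _ : (0 : ℝ) ≤ gain (Spider m ℓ) (some (t, d)) (some (t, q))),
      (Nat.cast_nonneg k : (0 : ℝ) ≤ k)]
  · have : (ℓ : ℝ) ≤ gain (Spider m ℓ) (some (t, d)) (some (t, q)) + d := by
      exact_mod_cast le_gain_of_gt (t := t) hdq
    have : (d : ℝ) + 1 ≤ k := by exact_mod_cast hd
    rw [if_neg hdq.ne']
    linarith

lemma ballGain_ge_of_near (hm : 3 ≤ m) {k : ℕ} (hk : k ≤ ℓ) (t : Fin m) {q : Fin ℓ}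
    (hq : q.val + 1 ≤ k) :
    (m - 1) * (k * ℓ - k * (k + 1) / 4) + k * (ℓ - k) + ℓ ≤ ballGain k (some (t, q)) := by
  have hbody : (2 * ℓ : ℝ) ≤ gain (Spider m ℓ) none (some (t, q)) := by
    exact_mod_cast (Nat.le_succ_of_le (Nat.mul_le_mul_right ℓ (by omega))).trans
      (le_gain_none_some t q)
  have hother : ((m : ℝ) - 1) * (k * ℓ - k * (k + 1) / 4) ≤
      ∑ s ∈ Finset.univ.erase t, legGain k s (some (t, q)) := by
    calc ((m : ℝ) - 1) * (k * ℓ - k * (k + 1) / 4)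
        = ∑ _s ∈ Finset.univ.erase t, (k * ℓ - k * (k + 1) / 4 : ℝ) := by
          rw [Finset.sum_const, Finset.card_erase_of_mem (Finset.mem_univ t), Finset.card_univ,
            Fintype.card_fin, nsmul_eq_mul, Nat.cast_pred (by omega)]
      _ ≤ _ := Finset.sum_le_sum fun s hs => legGain_ge_of_notMem_leg hk fun ⟨e, he⟩ =>
          Finset.ne_of_mem_erase hs (by simp at he; exact he.1)
  rw [ballGain, ← Finset.add_sum_erase _ _ (Finset.mem_univ t)]
  linarith [legGain_ge_of_mem_leg (by omega) hk t hq]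

lemma le_Gain_CS (hm : 3 ≤ m) {k : ℕ} (hk : k ≤ ℓ) {a : ℝ} (ha : 0 ≤ a)
    (hℓ : (ℓ : ℝ) = m * a ^ 2) (hak : 2 * a ≤ k) (hka : k < 2 * a + 1) (y : SpiderVert m ℓ) :
    ℓ - a - 1 ≤ Gain (Spider m ℓ) (CS m ℓ k) (pureStrat y) := by
  have hm' : (3 : ℝ) ≤ m := by exact_mod_cast hm
  have hk0 : (0 : ℝ) ≤ k := Nat.cast_nonneg k
  rw [Gain_CS, le_div_iff₀ (by positivity)]
  -- The hints encode `ℓ = m a² ≤ m a k / 2` and `k + 1 < 2 a + 2`.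
  by_cases hy : ∀ t q, y = some (t, q) → k ≤ q.val
  · have := ballGain_ge_of_far (by omega) hk hy
    nlinarith [mul_nonneg (mul_nonneg (by positivity : (0 : ℝ) ≤ m) ha) (sub_nonneg.2 hak),
      mul_nonneg (mul_nonneg (by positivity : (0 : ℝ) ≤ m) hk0) (sub_nonneg.2 hka.le)]
  · push Not at hy
    obtain ⟨t, q, rfl, hq⟩ := hy
    have := ballGain_ge_of_near hm hk t (q := q) (by omega)
    nlinarith [mul_nonneg hk0 (sub_nonneg.2 hka.le),
      mul_nonneg (mul_nonneg (by linarith : (0 : ℝ) ≤ m - 1) hk0) (sub_nonneg.2 hka.le),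
      mul_nonneg (mul_nonneg (by linarith : (0 : ℝ) ≤ m - 3) hk0) ha,
      mul_nonneg (by linarith : (0 : ℝ) ≤ m - 1) hk0]

lemma safetyValue_le_legLength : safetyValue (Spider m ℓ) ≤ ℓ := by
  refine _root_.safetyValue_le fun X hX hX1 => ⟨none, ?_⟩
  rw [Gain_pureStrat]
  calc ∑ x, X x * (gain (Spider m ℓ) x none : ℝ) ≤ ∑ x, X x * ℓ := by
        gcongr with x
        · exact hX x
        · exact_mod_cast gain_le_of_none x
    _ = ℓ := by rw [← Finset.sum_mul, hX1, one_mul]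

lemma sub_sqrt_div_sqrt_sub_one_le_safetyValue (hm : 3 ≤ m) (hℓ : 2 ≤ ℓ) :
    ℓ - √ℓ / √m - 1 ≤ safetyValue (Spider m ℓ) := by
  set a := √ℓ / √m with ha
  have hm' : (3 : ℝ) ≤ m := by exact_mod_cast hm
  have hℓ' : (2 : ℝ) ≤ ℓ := by exact_mod_cast hℓ
  have ha0 : 0 ≤ a := by positivity
  have hℓa : (ℓ : ℝ) = m * a ^ 2 := by
    rw [ha, div_pow, Real.sq_sqrt (by positivity), Real.sq_sqrt (by positivity)]
    field_simp
  have hk : ⌈2 * a⌉₊ ≤ ℓ := Nat.ceil_le.2 (by nlinarith)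
  exact _root_.le_safetyValue (CS_nonneg _) (sum_CS hk)
    (le_Gain_CS hm hk ha0 hℓa (Nat.le_ceil _) (Nat.ceil_lt_add_one (by positivity)))

end Spider

/-- For every `m ≥ 3` there is a constant `C ≥ 0` such that for all `ℓ ≥ 1` the safety
value on the spider `S(m,ℓ)` satisfies `ℓ - √ℓ/√m - C ≤ value ≤ ℓ`. -/
theorem stmt_9 (m : ℕ) (hm : 3 ≤ m) :
    ∃ C : ℝ, 0 ≤ C ∧ ∀ ℓ : ℕ, 1 ≤ ℓ →
      (ℓ : ℝ) - Real.sqrt ℓ / Real.sqrt m - C ≤ safetyValue (Spider m ℓ) ∧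
      safetyValue (Spider m ℓ) ≤ (ℓ : ℝ) := by
  refine ⟨1, zero_le_one, fun ℓ hℓ => ⟨?_, Spider.safetyValue_le_legLength⟩⟩
  rcases hℓ.eq_or_lt with rfl | hℓ
  · have : 0 ≤ Real.sqrt (1 : ℕ) / Real.sqrt m := by positivity
    linarith [safetyValue_nonneg (G := Spider m 1)]
  · exact Spider.sub_sqrt_div_sqrt_sub_one_le_safetyValue hm hℓ
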